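/- Let V and W be vector spaces over ℂ, let G_V and G_W be bilinear forms on V and W respectively, and let f : V → W be a surjective linear map satisfying G_W(f v, f v') = G_V(v, v') for all v, v' ∈ V. Let I ⊆ T(V) be the two-sided ideal generated by {ι(v) : v ∈ ker f} together with the elements ι(v)ι(v') − ι(v')ι(v) − G_V(v,v')·1, and let J ⊆ T(W) be the two-sided ideal generated by the elements ι(w)ι(w') − ι(w')ι(w) − G_W(w,w')·1. Then the induced algebra homomorphism T(f) : T(V) → T(W) maps I onto J, the preimage of J under T(f) equals I, and T(f) descends to an algebra isomorphism T(V)/I ≅ T(W)/J. -/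

import Mathlib

/-!
Choose a linear section `g` of `f`, so that `T(f) ∘ T(g) = id`. Because `G_W` is the pushforward
of `G_V` along `f`, `T(f)` sends the generators of `I` into `J` (those `ι v` with `v ∈ ker f` go
to `0`) and `T(g)` sends the CCR generators of `J` to CCR generators of `I`. Moreover
`x - T(g) (T(f) x) ∈ I` for all `x`, as it holds on the generators `ι v`, where
`v - g (f v) ∈ ker f`. So `T(g)` inverts `T(f)` modulo the ideals, which gives all three claims.
-/

/-- The algebra homomorphism `T(f) : T(V) → T(W)` on tensor algebras induced by a linear
map `f : V → W`; it is the unique unital algebra homomorphism with `T(f)(ι v) = ι (f v)`. -/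
noncomputable def tensorAlgebraMap {V W : Type*}
    [AddCommGroup V] [Module ℂ V] [AddCommGroup W] [Module ℂ W] (f : V →ₗ[ℂ] W) :
    TensorAlgebra ℂ V →ₐ[ℂ] TensorAlgebra ℂ W :=
  TensorAlgebra.lift ℂ ((TensorAlgebra.ι ℂ).comp f)

/-- The CCR generators `ι v * ι v' - ι v' * ι v - G(v,v')·1`, `v, v' ∈ V`. -/
def ccrSet {V : Type*} [AddCommGroup V] [Module ℂ V] (G : V →ₗ[ℂ] V →ₗ[ℂ] ℂ) :
    Set (TensorAlgebra ℂ V) :=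
  {x | ∃ v w : V, x = TensorAlgebra.ι ℂ v * TensorAlgebra.ι ℂ w
    - TensorAlgebra.ι ℂ w * TensorAlgebra.ι ℂ v
    - algebraMap ℂ (TensorAlgebra ℂ V) (G v w)}

/-- Generating set of the ideal `I ⊆ T(V)`: the elements `ι v` for `v ∈ ker f` together
with the CCR elements for `G_V`. -/
def genSetI {V W : Type*} [AddCommGroup V] [Module ℂ V] [AddCommGroup W] [Module ℂ W]
    (GV : V →ₗ[ℂ] V →ₗ[ℂ] ℂ) (f : V →ₗ[ℂ] W) : Set (TensorAlgebra ℂ V) :=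
  (⇑(TensorAlgebra.ι ℂ) '' (LinearMap.ker f : Set V)) ∪ ccrSet GV

/-- The defining relation of the two-sided ideal `I`; `RingQuot` of it is `T(V)/I`. -/
def relI {V W : Type*} [AddCommGroup V] [Module ℂ V] [AddCommGroup W] [Module ℂ W]
    (GV : V →ₗ[ℂ] V →ₗ[ℂ] ℂ) (f : V →ₗ[ℂ] W) :
    TensorAlgebra ℂ V → TensorAlgebra ℂ V → Prop :=
  fun a b => a - b ∈ genSetI GV f

/-- The defining relation of the two-sided ideal `J` generated by the CCR elements for
`G_W`; `RingQuot` of it is `T(W)/J`. -/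
def relJ {W : Type*} [AddCommGroup W] [Module ℂ W] (GW : W →ₗ[ℂ] W →ₗ[ℂ] ℂ) :
    TensorAlgebra ℂ W → TensorAlgebra ℂ W → Prop :=
  fun a b => a - b ∈ ccrSet GW


namespace TwoSidedIdeal

variable {A B F : Type*} [Ring A] [Ring B] [FunLike F A B] [RingHomClass F A B]

theorem mapsTo_span {φ : F} {S : Set A} {T : Set B} (h : Set.MapsTo φ S (span T)) :
    Set.MapsTo φ (span S) (span T) := fun _ hx =>
  mem_comap φ |>.mp <| span_le.mpr (fun _ hy => mem_comap φ |>.mpr (h hy)) hx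

end TwoSidedIdeal

theorem TensorAlgebra.sub_mem_of_forall_ι_sub_mem {R M : Type*} [CommRing R] [AddCommGroup M]
    [Module R M] {I : TwoSidedIdeal (TensorAlgebra R M)}
    (θ : TensorAlgebra R M →ₐ[R] TensorAlgebra R M) (h : ∀ m, ι R m - θ (ι R m) ∈ I)
    (x : TensorAlgebra R M) : x - θ x ∈ I := by
  induction x using TensorAlgebra.induction with
  | algebraMap r => simp [I.zero_mem]
  | ι m => exact h m
  | mul a b ha hb =>
    have hab : a * b - θ (a * b) = a * (b - θ b) + (a - θ a) * θ b := by
      rw [map_mul]; noncomm_ring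
    exact hab ▸ I.add_mem (I.mul_mem_left _ _ hb) (I.mul_mem_right _ _ ha)
  | add a b ha hb =>
    have hab : a + b - θ (a + b) = (a - θ a) + (b - θ b) := by
      rw [map_add]; abel
    exact hab ▸ I.add_mem ha hb

namespace RingQuot

variable {R A B : Type*} [CommSemiring R] [Ring A] [Ring B] [Algebra R A] [Algebra R B]

theorem mkAlgHom_eq_of_sub_mem_span {S : Set A} {x y : A}
    (h : x - y ∈ TwoSidedIdeal.span S) :
    mkAlgHom R (fun a b => a - b ∈ S) x = mkAlgHom R (fun a b => a - b ∈ S) y := by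
  have hS : S ⊆ TwoSidedIdeal.ker (mkAlgHom R (fun a b => a - b ∈ S)) := fun s hs =>
    (TwoSidedIdeal.mem_ker _).mpr <| by
      simpa using mkAlgHom_rel R (s := fun a b => a - b ∈ S) (x := s) (y := 0) (by simpa)
  simpa [sub_eq_zero] using (TwoSidedIdeal.mem_ker _).mp (TwoSidedIdeal.span_le.mpr hS h)

noncomputable def liftSpan (φ : A →ₐ[R] B) {S : Set A} {T : Set B}
    (h : Set.MapsTo φ S (TwoSidedIdeal.span T)) :
    RingQuot (fun a b => a - b ∈ S) →ₐ[R] RingQuot (fun a b => a - b ∈ T) :=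
  liftAlgHom R ⟨(mkAlgHom R _).comp φ, fun x y hxy =>
    mkAlgHom_eq_of_sub_mem_span <| map_sub φ x y ▸ h hxy⟩

@[simp]
theorem liftSpan_mkAlgHom (φ : A →ₐ[R] B) {S : Set A} {T : Set B}
    (h : Set.MapsTo φ S (TwoSidedIdeal.span T)) (x : A) :
    liftSpan φ h (mkAlgHom R _ x) = mkAlgHom R _ (φ x) :=
  liftAlgHom_mkAlgHom_apply ..

end RingQuot

section InverseModuloSpan

variable {R A B : Type*} [CommSemiring R] [Ring A] [Ring B] [Algebra R A] [Algebra R B]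
  {φ : A →ₐ[R] B} {ψ : B →ₐ[R] A} {S : Set A} {T : Set B}
  (hφ : Set.MapsTo φ S (TwoSidedIdeal.span T)) (hψ : Set.MapsTo ψ T (TwoSidedIdeal.span S))

include hφ hψ

theorem TwoSidedIdeal.image_span_eq_of_rightInverse (hφψ : Function.RightInverse ψ φ) :
    φ '' TwoSidedIdeal.span S = TwoSidedIdeal.span T :=
  (TwoSidedIdeal.mapsTo_span hφ).image_subset.antisymm fun y hy =>
    ⟨ψ y, TwoSidedIdeal.mapsTo_span hψ hy, hφψ y⟩

theorem TwoSidedIdeal.preimage_span_eq_of_sub_mem_span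
    (hψφ : ∀ x, x - ψ (φ x) ∈ TwoSidedIdeal.span S) :
    φ ⁻¹' TwoSidedIdeal.span T = TwoSidedIdeal.span S := by
  refine Set.Subset.antisymm (fun x hx => ?_) (TwoSidedIdeal.mapsTo_span hφ)
  simpa using (TwoSidedIdeal.span S).add_mem (hψφ x) (TwoSidedIdeal.mapsTo_span hψ hx)

noncomputable def RingQuot.algEquivOfInverseModSpan (hφψ : Function.RightInverse ψ φ)
    (hψφ : ∀ x, x - ψ (φ x) ∈ TwoSidedIdeal.span S) :
    RingQuot (fun a b => a - b ∈ S) ≃ₐ[R] RingQuot (fun a b => a - b ∈ T) :=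
  AlgEquiv.ofAlgHom (RingQuot.liftSpan φ hφ) (RingQuot.liftSpan ψ hψ)
    (by ext y; simp [hφψ y])
    (by ext x; simpa using (RingQuot.mkAlgHom_eq_of_sub_mem_span (hψφ x)).symm)

@[simp]
theorem RingQuot.algEquivOfInverseModSpan_mkAlgHom (hφψ : Function.RightInverse ψ φ)
    (hψφ : ∀ x, x - ψ (φ x) ∈ TwoSidedIdeal.span S) (x : A) :
    RingQuot.algEquivOfInverseModSpan hφ hψ hφψ hψφ (RingQuot.mkAlgHom R _ x) =
      RingQuot.mkAlgHom R _ (φ x) :=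
  RingQuot.liftSpan_mkAlgHom ..

end InverseModuloSpan

section TensorAlgebraMap

variable {V W : Type*} [AddCommGroup V] [Module ℂ V] [AddCommGroup W] [Module ℂ W]

@[simp]
theorem tensorAlgebraMap_ι (f : V →ₗ[ℂ] W) (v : V) :
    tensorAlgebraMap f (TensorAlgebra.ι ℂ v) = TensorAlgebra.ι ℂ (f v) :=
  TensorAlgebra.lift_ι_apply ..

theorem tensorAlgebraMap_rightInverse {f : V →ₗ[ℂ] W} {g : W →ₗ[ℂ] V} (hfg : f ∘ₗ g = .id) :
    Function.RightInverse (tensorAlgebraMap g) (tensorAlgebraMap f) := by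
  have hcomp : (tensorAlgebraMap f).comp (tensorAlgebraMap g) = AlgHom.id ℂ _ :=
    TensorAlgebra.hom_ext <| LinearMap.ext fun w => by
      simpa using congrArg (TensorAlgebra.ι ℂ) (LinearMap.congr_fun hfg w)
  exact fun y => AlgHom.congr_fun hcomp y

theorem mapsTo_ccrSet {GV : V →ₗ[ℂ] V →ₗ[ℂ] ℂ} {GW : W →ₗ[ℂ] W →ₗ[ℂ] ℂ} {f : V →ₗ[ℂ] W}
    (hG : ∀ v v' : V, GW (f v) (f v') = GV v v') :
    Set.MapsTo (tensorAlgebraMap f) (ccrSet GV) (ccrSet GW) := by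
  rintro _ ⟨v, v', rfl⟩
  exact ⟨f v, f v', by simp [hG]⟩

theorem mapsTo_genSetI {GV : V →ₗ[ℂ] V →ₗ[ℂ] ℂ} {GW : W →ₗ[ℂ] W →ₗ[ℂ] ℂ} {f : V →ₗ[ℂ] W}
    (hG : ∀ v v' : V, GW (f v) (f v') = GV v v') :
    Set.MapsTo (tensorAlgebraMap f) (genSetI GV f) (TwoSidedIdeal.span (ccrSet GW)) := by
  rintro _ (⟨v, hv, rfl⟩ | hx)
  · rw [SetLike.mem_coe, tensorAlgebraMap_ι, LinearMap.mem_ker.mp hv, map_zero]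
    exact zero_mem _
  · exact TwoSidedIdeal.subset_span (mapsTo_ccrSet hG hx)

theorem sub_tensorAlgebraMap_mem_span_genSetI (GV : V →ₗ[ℂ] V →ₗ[ℂ] ℂ) {f : V →ₗ[ℂ] W}
    {g : W →ₗ[ℂ] V} (hfg : f ∘ₗ g = .id) (x : TensorAlgebra ℂ V) :
    x - tensorAlgebraMap g (tensorAlgebraMap f x) ∈ TwoSidedIdeal.span (genSetI GV f) := by
  refine TensorAlgebra.sub_mem_of_forall_ι_sub_mem
    ((tensorAlgebraMap g).comp (tensorAlgebraMap f)) (fun v => ?_) x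
  have hker : v - g (f v) ∈ LinearMap.ker f := by
    simpa [sub_eq_zero] using (LinearMap.congr_fun hfg (f v)).symm
  exact TwoSidedIdeal.subset_span <| Or.inl ⟨_, hker, by simp⟩

end TensorAlgebraMap

/-- **Isomorphism of CCR quotients along a surjective symplectic map.**
Let `f : V → W` be a surjective linear map with `G_W(f v, f v') = G_V(v, v')`.  Let
`I ⊆ T(V)` be the two-sided ideal generated by `{ι v : v ∈ ker f}` and the CCR elements
for `G_V`, and `J ⊆ T(W)` the two-sided ideal generated by the CCR elements for `G_W`.
Then `T(f)` maps `I` onto `J`, the preimage of `J` under `T(f)` equals `I`, and `T(f)`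
descends to an algebra isomorphism `T(V)/I ≃ T(W)/J`. -/
theorem tensorAlgebraMap_ccr_quot_iso {V W : Type*}
    [AddCommGroup V] [Module ℂ V] [AddCommGroup W] [Module ℂ W]
    (GV : V →ₗ[ℂ] V →ₗ[ℂ] ℂ) (GW : W →ₗ[ℂ] W →ₗ[ℂ] ℂ)
    (f : V →ₗ[ℂ] W) (hf : Function.Surjective f)
    (hG : ∀ v v' : V, GW (f v) (f v') = GV v v') :
    ⇑(tensorAlgebraMap f) '' (TwoSidedIdeal.span (genSetI GV f) : Set (TensorAlgebra ℂ V))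
      = (TwoSidedIdeal.span (ccrSet GW) : Set (TensorAlgebra ℂ W)) ∧
    ⇑(tensorAlgebraMap f) ⁻¹' (TwoSidedIdeal.span (ccrSet GW) : Set (TensorAlgebra ℂ W))
      = (TwoSidedIdeal.span (genSetI GV f) : Set (TensorAlgebra ℂ V)) ∧
    ∃ e : RingQuot (relI GV f) ≃ₐ[ℂ] RingQuot (relJ GW),
      ∀ x : TensorAlgebra ℂ V,
        e (RingQuot.mkAlgHom ℂ (relI GV f) x)
          = RingQuot.mkAlgHom ℂ (relJ GW) (tensorAlgebraMap f x) := by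
  obtain ⟨g, hfg⟩ := f.exists_rightInverse_of_surjective (LinearMap.range_eq_top.mpr hf)
  have hfg' : ∀ w, f (g w) = w := LinearMap.congr_fun hfg
  have hGg : ∀ w w' : W, GV (g w) (g w') = GW w w' := fun w w' => by rw [← hG, hfg', hfg']
  have hφ := mapsTo_genSetI (GW := GW) hG
  have hψ : Set.MapsTo (tensorAlgebraMap g) (ccrSet GW) (TwoSidedIdeal.span (genSetI GV f)) :=
    fun _ hy => TwoSidedIdeal.subset_span <| Or.inr (mapsTo_ccrSet hGg hy)
  have hφψ := tensorAlgebraMap_rightInverse hfg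
  have hψφ := sub_tensorAlgebraMap_mem_span_genSetI GV hfg
  exact ⟨TwoSidedIdeal.image_span_eq_of_rightInverse hφ hψ hφψ,
    TwoSidedIdeal.preimage_span_eq_of_sub_mem_span hφ hψ hψφ,
    RingQuot.algEquivOfInverseModSpan hφ hψ hφψ hψφ,
    RingQuot.algEquivOfInverseModSpan_mkAlgHom hφ hψ hφψ hψφ⟩
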